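/- arXiv:2009.08555 — 3 statements merged into one kernel-verified Lean document; each statement's English description precedes it below -/
import Mathlib

section
/- Let d ≥ 1 and N = 2^r. (i) There exists a universal constant c > 0 such that every probability distribution p = (p_ω) on {−N/2+1,…,N/2}^d satisfies Γ(p) ≥ c·log(N). (ii) There exists a constant C_d > 0 depending only on d such that if p_ω = C_{N,d}·(q_ω)^{−2} for all ω, where C_{N,d} = ( Σ_ω (q_ω)^{−2} )^{−1} is the normalizing constant making p a probability distribution, then Γ(p) ≤ C_d·log(N). -/
open MeasureTheory
open scoped BigOperators ENNReal

noncomputable section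

/-- The `ℓ²`-norm of a finitely indexed complex vector. -/
def l2norm {ι : Type*} [Fintype ι] (v : ι → ℂ) : ℝ := Real.sqrt (∑ i, ‖v i‖ ^ 2)

/-- The `ℓ¹`-norm of a finitely indexed complex vector. -/
def l1norm {ι : Type*} [Fintype ι] (v : ι → ℂ) : ℝ := ∑ i, ‖v i‖

/-- The `ℓ^{2,1}`-norm of a matrix (rows indexed by `ι`, columns by `κ`). -/
def l21norm {ι κ : Type*} [Fintype ι] [Fintype κ] (X : ι → κ → ℂ) : ℝ := ∑ i, l2norm (X i)

/-- The `ℓ^{2,2}` (Frobenius) norm of a matrix. -/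
def l22norm {ι κ : Type*} [Fintype ι] [Fintype κ] (X : ι → κ → ℂ) : ℝ :=
  Real.sqrt (∑ i, ∑ j, ‖X i j‖ ^ 2)

/-- Best `s`-term approximation error in the `ℓ¹`-norm. -/
def sigma1 {ι : Type*} [Fintype ι] (s : ℕ) (x : ι → ℂ) : ℝ :=
  sInf { t | ∃ z : ι → ℂ, {i | z i ≠ 0}.ncard ≤ s ∧ t = l1norm (fun i => x i - z i) }

/-- Best `s`-term (row-sparse) approximation error in the `ℓ^{2,1}`-norm. -/
def sigma21 {ι κ : Type*} [Fintype ι] [Fintype κ] (s : ℕ) (X : ι → κ → ℂ) : ℝ :=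
  sInf { t | ∃ Z : ι → κ → ℂ, {i | Z i ≠ 0}.ncard ≤ s ∧
    t = l21norm (fun i j => X i j - Z i j) }

/-- Cyclic successor on `Fin N`. -/
def cyc {N : ℕ} (i : Fin N) : Fin N := ⟨(i.val + 1) % N, Nat.mod_lt _ i.pos⟩

/-- One-dimensional periodic discrete gradient. -/
def grad1 {N : ℕ} (x : Fin N → ℂ) : Fin N → ℂ := fun i => x (cyc i) - x i

/-- One-dimensional TV semi-norm. -/
def tv1 {N : ℕ} (x : Fin N → ℂ) : ℝ := l1norm (grad1 x)

/-- `j`-th partial (periodic) discrete derivative on `d`-dimensional images. -/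
def pgrad {N d : ℕ} (j : Fin d) (x : (Fin d → Fin N) → ℂ) : (Fin d → Fin N) → ℂ :=
  fun i => x (Function.update i j (cyc (i j))) - x i

/-- Anisotropic discrete gradient (all partial derivatives stacked into one vector). -/
def agrad {N d : ℕ} (x : (Fin d → Fin N) → ℂ) : Fin d × (Fin d → Fin N) → ℂ :=
  fun q => pgrad q.1 x q.2

/-- Anisotropic TV semi-norm. -/
def tvA {N d : ℕ} (x : (Fin d → Fin N) → ℂ) : ℝ := l1norm (agrad x)

/-- Isotropic discrete gradient (partial derivatives as columns of a matrix). -/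
def igrad {N d : ℕ} (x : (Fin d → Fin N) → ℂ) : (Fin d → Fin N) → Fin d → ℂ :=
  fun i j => pgrad j x i

/-- Isotropic TV semi-norm. -/
def tvI {N d : ℕ} (x : (Fin d → Fin N) → ℂ) : ℝ := l21norm (igrad x)

/-- Frequency `ϱ(i) = (-1)^i ⌊i/2⌋` associated with the (1-based) row index `i`. -/
def varrho (N : ℕ) (i : Fin N) : ℤ := (-1) ^ (i.val + 1) * (((i.val + 1) / 2 : ℕ) : ℤ)

/-- One-dimensional DFT matrix, rows ordered by `ϱ`. -/
def dft (N : ℕ) : Matrix (Fin N) (Fin N) ℂ :=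
  Matrix.of fun i j =>
    Complex.exp (-(2 * (Real.pi : ℂ) * Complex.I * ((varrho N i : ℤ) : ℂ) * (j.val : ℂ)) / (N : ℂ))

/-- `d`-dimensional DFT matrix (Kronecker product of `d` copies of `dft N`). -/
def dftD (N d : ℕ) : Matrix (Fin d → Fin N) (Fin d → Fin N) ℂ :=
  Matrix.of fun i j => ∏ k, dft N (i k) (j k)

/-- `ω̄ = max {1, |ω|}`. -/
def obar (ω : ℤ) : ℝ := max 1 |(ω : ℝ)|

/-- The largest product of `k` of the values `w i` (as a sup over `k`-subsets). -/
def maxProd {d : ℕ} (k : ℕ) (w : Fin d → ℝ) : ℝ :=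
  sSup { t | ∃ S : Finset (Fin d), S.card = k ∧ t = ∏ i ∈ S, w i }

/-- The square `q_ω ^ 2` of the quantity `q_ω`: the product of the `⌈d/2⌉` largest
values times the product of the `⌊d/2⌋` largest values (valid since all `w i ≥ 1`). -/
def qsq {d : ℕ} (w : Fin d → ℝ) : ℝ := maxProd ((d + 1) / 2) w * maxProd (d / 2) w

/-- `q_ω ^ 2` evaluated at the frequency `ω` of a `d`-dimensional row index. -/
def qsqFreq {N d : ℕ} (i : Fin d → Fin N) : ℝ := qsq fun k => obar (varrho N (i k))

/-- The discrete measure on a finite type with density `w`. -/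
def discMeasure {α : Type*} [Fintype α] [MeasurableSpace α] (w : α → ℝ) : Measure α :=
  ∑ a : α, ENNReal.ofReal (w a) • Measure.dirac a

/-- `xh` is a minimizer of `min tv z` subject to `‖A z - y‖₂ ≤ η`. -/
def IsMinimizer {R C : Type*} [Fintype R] [Fintype C]
    (tv : (C → ℂ) → ℝ) (A : Matrix R C ℂ) (y : R → ℂ) (η : ℝ) (xh : C → ℂ) : Prop :=
  l2norm (A.mulVec xh - y) ≤ η ∧
    ∀ z : C → ℂ, l2norm (A.mulVec z - y) ≤ η → tv xh ≤ tv z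

/-- The scaled row-subsampled matrix `(1/√mTot) P_Ω F` with rows `row k` of `F`. -/
def subMat {ι α : Type*} [Fintype α] (F : Matrix α α ℂ) (mTot : ℕ) (row : ι → α) :
    Matrix ι α ℂ :=
  Matrix.of fun k j => (((Real.sqrt mTot)⁻¹ : ℝ) : ℂ) * F (row k) j

/-- Entry `v_a(b/2^r)` of the sequency-ordered Walsh--Hadamard matrix. -/
def walshEntry (r a b : ℕ) : ℂ :=
  (-1 : ℂ) ^ (∑ i ∈ Finset.range r,
    ((if Nat.testBit a i then 1 else 0) + (if Nat.testBit a (i + 1) then 1 else 0)) *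
      (if Nat.testBit b (r - 1 - i) then (1 : ℕ) else 0))

/-- One-dimensional sequency-ordered discrete Walsh--Hadamard transform. -/
def walsh1 (r : ℕ) : Matrix (Fin (2 ^ r)) (Fin (2 ^ r)) ℂ :=
  Matrix.of fun a b => walshEntry r a.val b.val

/-- `d`-dimensional sequency-ordered discrete Walsh--Hadamard transform. -/
def walshD (r d : ℕ) : Matrix (Fin d → Fin (2 ^ r)) (Fin d → Fin (2 ^ r)) ℂ :=
  Matrix.of fun a b => ∏ k, walsh1 r (a k) (b k)

/-- `ℓ∞`-norm of a multi-index. -/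
def linfN {d N : ℕ} (i : Fin d → Fin N) : ℝ := ⨆ k, ((i k : ℕ) : ℝ)

/-- Discretized, `ℓ²`-normalized one-dimensional Haar wavelet `ψ^{(e)}_{j,n}` on `Fin (2^r)`. -/
def haar1 (r j n : ℕ) (e : Bool) : Fin (2 ^ r) → ℂ := fun t =>
  if n * 2 ^ (r - j) ≤ t.val ∧ t.val < n * 2 ^ (r - j) + 2 ^ (r - j - 1) then
    (((2 : ℝ) ^ (((j : ℝ) - (r : ℝ)) / 2) : ℝ) : ℂ)
  else if n * 2 ^ (r - j) + 2 ^ (r - j - 1) ≤ t.val ∧ t.val < (n + 1) * 2 ^ (r - j) then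
    (if e then (-1 : ℂ) else 1) * (((2 : ℝ) ^ (((j : ℝ) - (r : ℝ)) / 2) : ℝ) : ℂ)
  else 0

/-- Index set for the `d`-dimensional discrete Haar wavelet basis at resolution `2^r`. -/
def HaarIdx (r d : ℕ) : Type :=
  Unit ⊕ (Σ j : Fin r, (Fin d → Fin (2 ^ (j : ℕ))) × { e : Fin d → Bool // e ≠ fun _ => false })

instance (r d : ℕ) : Fintype (HaarIdx r d) :=
  inferInstanceAs (Fintype (Unit ⊕
    (Σ j : Fin r, (Fin d → Fin (2 ^ (j : ℕ))) × { e : Fin d → Bool // e ≠ fun _ => false })))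

/-- The `d`-dimensional discrete Haar wavelet transform: the matrix whose columns are the
`d`-dimensional tensor-product discrete Haar basis vectors. -/
def haarD (r d : ℕ) : Matrix (Fin d → Fin (2 ^ r)) (HaarIdx r d) ℂ :=
  Matrix.of fun t c =>
    match c with
    | Sum.inl _ => ∏ k, haar1 r 0 0 false (t k)
    | Sum.inr ⟨j, n, e⟩ => ∏ k, haar1 r (j : ℕ) ((n k) : ℕ) (e.val k) (t k)

/-- `A` has the restricted isometry property of order `s` with constant `δ_s ≤ δ`. -/
def HasRIP {R C : Type*} [Fintype R] [Fintype C] (A : Matrix R C ℂ) (s : ℕ) (δ : ℝ) : Prop :=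
  ∀ x : C → ℂ, {i | x i ≠ 0}.ncard ≤ s →
    (1 - δ) * l2norm x ^ 2 ≤ l2norm (A.mulVec x) ^ 2 ∧
      l2norm (A.mulVec x) ^ 2 ≤ (1 + δ) * l2norm x ^ 2

/-- The `ℓ^{2,2}`-robust null space property of order `s` with constants `ρ, γ`,
for matrices with `M` columns. -/
def RNSP22 (M : ℕ) {m N : ℕ} (A : Matrix (Fin m) (Fin N) ℂ) (s : ℕ) (ρ γ : ℝ) : Prop :=
  ∀ (X : Fin N → Fin M → ℂ) (Δ : Finset (Fin N)), Δ.card ≤ s →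
    l22norm (fun i j => if i ∈ Δ then X i j else 0) ≤
      ρ / Real.sqrt s * l21norm (fun i j => if i ∈ Δ then (0 : ℂ) else X i j) +
        γ * l22norm (fun k j => ∑ i, A k i * X i j)

end
noncomputable section

/-!
Since `∑ p = 1`, every admissible `Γ` satisfies `Γ ≥ ∑_ω q_ω⁻²`, with equality for
`p ∝ q⁻²`; so both parts say that `∑_ω q_ω⁻² ≍ log N`. Sort the frequencies into dyadic
levels, `ω̄ₖ ≈ 2^{lₖ}`. For the lower bound, each cube of frequencies all of whose coordinates
lie in level `j < log₂ N` contributes at least `1`. For the upper bound, trading the smallest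
coordinate for the largest one gives `q_ω² ≥ (∏ₖ ω̄ₖ) · ω̄_max / ω̄_min`, and with `β = 2^{1/d}`
the factor `ω̄_min / ω̄_max` is dominated by `∏ₖ β^{m - lₖ}`, `m = min lₖ`. Thus `q_ω⁻²` is
bounded by a product of one-dimensional weights; for each of the `log₂ N + 1` values of `m`
their sum factorises into `d` geometric series.
-/

open Finset

section MaxProd

variable {d : ℕ}

lemma prod_le_maxProd (w : Fin d → ℝ) {k : ℕ} {S : Finset (Fin d)} (hS : #S = k) :
    ∏ i ∈ S, w i ≤ maxProd k w := by
  refine le_csSup ((Set.finite_range fun S : Finset (Fin d) => ∏ i ∈ S, w i).subset ?_).bddAbove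
    ⟨S, hS, rfl⟩
  rintro _ ⟨S, -, rfl⟩
  exact ⟨S, rfl⟩

lemma maxProd_le_pow {w : Fin d → ℝ} {M : ℝ} (hw : ∀ i, 0 ≤ w i) (hwM : ∀ i, w i ≤ M)
    (hM : 0 ≤ M) (k : ℕ) : maxProd k w ≤ M ^ k := by
  refine Real.sSup_le ?_ (pow_nonneg hM k)
  rintro _ ⟨S, rfl, rfl⟩
  simpa using prod_le_prod (fun i _ => hw i) fun i _ => hwM i

lemma qsq_le_pow {w : Fin d → ℝ} {M : ℝ} (hw : ∀ i, 0 ≤ w i) (hwM : ∀ i, w i ≤ M)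
    (hM : 0 ≤ M) : qsq w ≤ M ^ d := by
  calc qsq w ≤ M ^ ((d + 1) / 2) * M ^ (d / 2) :=
        mul_le_mul (maxProd_le_pow hw hwM hM _) (maxProd_le_pow hw hwM hM _)
          (Real.sSup_nonneg fun _ ⟨_, _, ht⟩ => ht ▸ prod_nonneg fun i _ => hw i)
          (pow_nonneg hM _)
    _ = M ^ d := by rw [← pow_add]; congr 1; omega

lemma exists_prod_mul_eq {M : Type*} [CommMonoid M] (f : Fin d → M) (a b : Fin d) :
    ∃ S T : Finset (Fin d), #S = (d + 1) / 2 ∧ #T = d / 2 ∧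
      (∏ i, f i) * f a = (∏ i ∈ S, f i) * (∏ i ∈ T, f i) * f b := by
  obtain ⟨T, haT, hTb, hT⟩ : ∃ T : Finset (Fin d), (a ≠ b → a ∈ T) ∧ b ∉ T ∧ #T = d / 2 := by
    rcases eq_or_ne a b with rfl | hab
    · obtain ⟨T, hT, hcard⟩ := exists_subset_card_eq (s := univ.erase a) (n := d / 2)
        (by have := Fin.pos a; simp; omega)
      exact ⟨T, fun h => (h rfl).elim, fun h => by simpa using hT h, hcard⟩
    · have hd : 2 ≤ d := by
        by_contra h
        exact hab (Fin.ext (by omega))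
      obtain ⟨T, haT, hTb, hcard⟩ := exists_subsuperset_card_eq (s := {a}) (t := univ.erase b)
        (n := d / 2) (by simpa using hab) (by simp; omega) (by simp; omega)
      exact ⟨T, fun _ => haT (mem_singleton_self a), fun h => by simpa using hTb h, hcard⟩
  have hbTc : b ∈ Tᶜ := mem_compl.2 hTb
  have haTc : a ∉ Tᶜ.erase b := by
    rcases eq_or_ne a b with rfl | hab
    · exact notMem_erase a _
    · simpa [hab] using haT hab
  refine ⟨insert a (Tᶜ.erase b), T, ?_, hT, ?_⟩
  · rw [card_insert_of_notMem haTc, card_erase_of_mem hbTc, card_compl, hT, Fintype.card_fin]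
    have := Fin.pos a
    omega
  · calc (∏ i, f i) * f a = (∏ i ∈ T, f i) * (f b * ∏ i ∈ Tᶜ.erase b, f i) * f a := by
          rw [mul_prod_erase _ _ hbTc, prod_mul_prod_compl]
      _ = (∏ i ∈ insert a (Tᶜ.erase b), f i) * (∏ i ∈ T, f i) * f b := by
          rw [prod_insert haTc]
          ac_rfl

lemma prod_mul_le_qsq_mul {w : Fin d → ℝ} (hw : ∀ i, 0 ≤ w i) (a b : Fin d) :
    (∏ i, w i) * w a ≤ qsq w * w b := by
  obtain ⟨S, T, hS, hT, heq⟩ := exists_prod_mul_eq w a b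
  rw [heq]
  refine mul_le_mul_of_nonneg_right (mul_le_mul (prod_le_maxProd w hS) (prod_le_maxProd w hT)
    (prod_nonneg fun i _ => hw i) ?_) (hw b)
  exact (prod_nonneg fun i _ => hw i).trans (prod_le_maxProd w hS)

end MaxProd

section DyadicLevel

variable {N : ℕ}

def dyadicLevel (x : Fin N) : ℕ := Nat.log 2 (x.val + 1)

lemma obar_varrho (x : Fin N) : obar (varrho N x) = (max 1 ((x.val + 1) / 2) : ℕ) := by
  unfold obar varrho
  push_cast
  rw [abs_mul, abs_pow, abs_neg, abs_one, one_pow, one_mul, abs_of_nonneg (by positivity)]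
  norm_cast

lemma dyadicLevel_eq_iff (x : Fin N) (j : ℕ) :
    dyadicLevel x = j ↔ 2 ^ j ≤ x.val + 1 ∧ x.val + 1 < 2 ^ (j + 1) := by
  refine ⟨?_, fun h => Nat.log_eq_of_pow_le_of_lt_pow h.1 h.2⟩
  rintro rfl
  exact ⟨Nat.pow_log_le_self 2 x.val.succ_ne_zero, Nat.lt_pow_succ_log_self one_lt_two _⟩

lemma obar_varrho_le (x : Fin N) : obar (varrho N x) ≤ 2 ^ dyadicLevel x := by
  obtain ⟨-, h⟩ := (dyadicLevel_eq_iff x _).1 rfl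
  have : 1 ≤ 2 ^ dyadicLevel x := Nat.one_le_two_pow
  rw [pow_succ] at h
  rw [obar_varrho]
  exact_mod_cast (show max 1 ((x.val + 1) / 2) ≤ 2 ^ dyadicLevel x by omega)

lemma two_pow_le_two_mul_obar_varrho (x : Fin N) :
    (2 : ℝ) ^ dyadicLevel x ≤ 2 * obar (varrho N x) := by
  obtain ⟨h, -⟩ := (dyadicLevel_eq_iff x _).1 rfl
  rw [obar_varrho]
  suffices 2 ^ dyadicLevel x ≤ 2 * max 1 ((x.val + 1) / 2) by exact_mod_cast this
  rcases hj : dyadicLevel x with _ | j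
  · omega
  · rw [hj, pow_succ] at h
    rw [pow_succ]
    omega

lemma dyadicLevel_le_log (x : Fin N) : dyadicLevel x ≤ Nat.log 2 N :=
  Nat.log_mono_right x.isLt

lemma card_dyadicLevel_eq_le (j : ℕ) : #{x : Fin N | dyadicLevel x = j} ≤ 2 ^ j := by
  calc #{x : Fin N | dyadicLevel x = j} ≤ #(Ico (2 ^ j) (2 ^ (j + 1))) := by
        refine card_le_card_of_injOn (fun x => x.val + 1) (fun x hx => ?_)
          fun x _ y _ hxy => Fin.ext (by simpa using hxy)
        simpa [dyadicLevel_eq_iff] using hx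
    _ = 2 ^ j := by rw [Nat.card_Ico, pow_succ]; omega

lemma two_pow_le_card_dyadicLevel_eq {j : ℕ} (hj : 2 ^ (j + 1) ≤ N) :
    2 ^ j ≤ #{x : Fin N | dyadicLevel x = j} := by
  calc 2 ^ j = #(Ico (2 ^ j) (2 ^ (j + 1))) := by rw [Nat.card_Ico, pow_succ]; omega
    _ ≤ #((univ.filter fun x : Fin N => dyadicLevel x = j).image fun x => x.val + 1) := by
        refine card_le_card fun m hm => ?_
        have hm' := mem_Ico.1 hm
        have : 1 ≤ 2 ^ j := Nat.one_le_two_pow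
        refine mem_image.2 ⟨(⟨m - 1, by omega⟩ : Fin N), ?_, by simp only; omega⟩
        simp only [mem_filter, mem_univ, true_and, dyadicLevel_eq_iff]
        omega
    _ ≤ _ := card_image_le

lemma sum_div_obar_varrho_le (h : ℕ → ℝ) (hh : ∀ s, 0 ≤ h s) :
    ∑ x : Fin N, h (dyadicLevel x) / obar (varrho N x) ≤
      2 * ∑ s ∈ range (Nat.log 2 N + 1), h s := by
  rw [← sum_fiberwise_of_maps_to (g := dyadicLevel) (t := range (Nat.log 2 N + 1))
    fun x _ => mem_range.2 (Nat.lt_succ_of_le (dyadicLevel_le_log x)), mul_sum]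
  refine sum_le_sum fun s _ => ?_
  calc ∑ x with dyadicLevel x = s, h (dyadicLevel x) / obar (varrho N x)
      ≤ ∑ x with dyadicLevel x = s, h s / (2 ^ s / 2) := by
        refine sum_le_sum fun x hx => ?_
        obtain rfl := (mem_filter.1 hx).2
        exact div_le_div_of_nonneg_left (hh _) (by positivity)
          (by linarith [two_pow_le_two_mul_obar_varrho x])
    _ = #{x : Fin N | dyadicLevel x = s} * (h s / (2 ^ s / 2)) := by
        rw [sum_const, nsmul_eq_mul]
    _ ≤ 2 ^ s * (h s / (2 ^ s / 2)) := by
        gcongr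
        · exact div_nonneg (hh s) (by positivity)
        · exact_mod_cast card_dyadicLevel_eq_le s
    _ = 2 * h s := by field_simp

end DyadicLevel

section LowerBound

variable {N d : ℕ}

lemma one_le_qsq {w : Fin d → ℝ} (hw : ∀ i, 1 ≤ w i) : 1 ≤ qsq w := by
  have one_le_maxProd : ∀ k ≤ d, 1 ≤ maxProd k w := fun k hk => by
    obtain ⟨S, -, hS⟩ := exists_subset_card_eq (s := (univ : Finset (Fin d))) (by simpa using hk)
    exact (one_le_prod fun i _ => hw i).trans (prod_le_maxProd w hS)
  exact one_le_mul_of_one_le_of_one_le (one_le_maxProd _ (by omega)) (one_le_maxProd _ (by omega))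

lemma qsqFreq_pos (i : Fin d → Fin N) : 0 < qsqFreq i :=
  zero_lt_one.trans_le (one_le_qsq fun _ => le_max_left _ _)

lemma one_le_sum_inv_qsqFreq_piFinset {j : ℕ} (hj : 2 ^ (j + 1) ≤ N) :
    1 ≤ ∑ i ∈ Fintype.piFinset fun _ : Fin d => {x : Fin N | dyadicLevel x = j},
      (qsqFreq i)⁻¹ := by
  have hterm : ∀ i ∈ Fintype.piFinset fun _ : Fin d => {x : Fin N | dyadicLevel x = j},
      ((2 ^ j : ℝ) ^ d)⁻¹ ≤ (qsqFreq i)⁻¹ := fun i hi => by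
    refine inv_anti₀ (qsqFreq_pos i) (qsq_le_pow (fun _ => zero_le_one.trans (le_max_left _ _))
      (fun k => ?_) (by positivity))
    have hk : dyadicLevel (i k) = j := by simpa using Fintype.mem_piFinset.1 hi k
    exact hk ▸ obar_varrho_le (i k)
  have hcard : ((2 ^ j : ℝ) ^ d) ≤ #{x : Fin N | dyadicLevel x = j} ^ d := by
    gcongr
    exact_mod_cast two_pow_le_card_dyadicLevel_eq hj
  calc (1 : ℝ) ≤ #{x : Fin N | dyadicLevel x = j} ^ d * ((2 ^ j : ℝ) ^ d)⁻¹ := by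
        rw [le_mul_inv_iff₀ (by positivity), one_mul]
        exact hcard
    _ ≤ _ := by
        simpa [Fintype.card_piFinset] using card_nsmul_le_sum _ _ _ hterm

lemma log_le_sum_inv_qsqFreq (hd : 0 < d) :
    (Nat.log 2 N : ℝ) ≤ ∑ i : Fin d → Fin N, (qsqFreq i)⁻¹ := by
  set B : ℕ → Finset (Fin d → Fin N) :=
    fun j => Fintype.piFinset fun _ => {x : Fin N | dyadicLevel x = j}
  have hdisj : (range (Nat.log 2 N) : Set ℕ).PairwiseDisjoint B := by
    refine fun j _ j' _ hne => disjoint_left.2 fun i hi hi' => hne ?_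
    simp only [B, Fintype.mem_piFinset, mem_filter, mem_univ, true_and] at hi hi'
    exact (hi ⟨0, hd⟩).symm.trans (hi' ⟨0, hd⟩)
  calc (Nat.log 2 N : ℝ) = ∑ _j ∈ range (Nat.log 2 N), 1 := by simp
    _ ≤ ∑ j ∈ range (Nat.log 2 N), ∑ i ∈ B j, (qsqFreq i)⁻¹ := by
        refine sum_le_sum fun j hj => one_le_sum_inv_qsqFreq_piFinset ?_
        have hj := mem_range.1 hj
        exact Nat.pow_le_of_le_log (by rintro rfl; simp at hj) hj
    _ = ∑ i ∈ (range (Nat.log 2 N)).biUnion B, (qsqFreq i)⁻¹ := (sum_biUnion hdisj).symm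
    _ ≤ ∑ i : Fin d → Fin N, (qsqFreq i)⁻¹ :=
        sum_le_sum_of_subset_of_nonneg (subset_univ _) fun i _ _ => (inv_pos.2 (qsqFreq_pos i)).le

end LowerBound

section UpperBound

variable {N d : ℕ} {β : ℝ}

lemma inv_qsq_le_two_mul_prod (hβ : 1 ≤ β) (hβd : β ^ d = 2) {w : Fin d → ℝ} {l : Fin d → ℕ}
    (hwl : ∀ k, w k ≤ 2 ^ l k) (hlw : ∀ k, (2 : ℝ) ^ l k ≤ 2 * w k) (b : Fin d) :
    (qsq w)⁻¹ ≤ 2 * ∏ k, β ^ l b / (β ^ l k * w k) := by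
  have hw : ∀ k, 0 < w k := fun k => by linarith [hlw k, pow_pos (two_pos (α := ℝ)) (l k)]
  have : Nonempty (Fin d) := ⟨b⟩
  obtain ⟨a, ha⟩ := Finite.exists_max l
  have hprod : 0 < ∏ k, w k := prod_pos fun k _ => hw k
  have hqsq := prod_mul_le_qsq_mul (fun k => (hw k).le) a b
  have hq : 0 < qsq w := pos_of_mul_pos_left ((mul_pos hprod (hw a)).trans_le hqsq) (hw b).le
  have hβsum : β ^ ∑ k, l k ≤ 2 ^ l a := by
    calc β ^ ∑ k, l k ≤ β ^ (d * l a) := pow_le_pow_right₀ hβ (by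
          simpa using sum_le_card_nsmul univ l (l a) fun k _ => ha k)
      _ = 2 ^ l a := by rw [pow_mul, hβd]
  have hrhs : ∏ k, β ^ l b / (β ^ l k * w k) = 2 ^ l b / (β ^ (∑ k, l k) * ∏ k, w k) := by
    rw [prod_div_distrib, prod_const, prod_mul_distrib, prod_pow_eq_pow_sum, card_univ,
      Fintype.card_fin, pow_right_comm, hβd]
  rw [hrhs, mul_div_assoc', le_div_iff₀ (by positivity), inv_mul_le_iff₀ hq]
  calc β ^ (∑ k, l k) * ∏ k, w k ≤ 2 * ((∏ k, w k) * w a) := by nlinarith [hlw a]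
    _ ≤ 2 * (qsq w * w b) := by gcongr
    _ ≤ qsq w * (2 * 2 ^ l b) := by nlinarith [hwl b]

def dyadicWeight (β : ℝ) (t : ℕ) (x : Fin N) : ℝ :=
  if t ≤ dyadicLevel x then β ^ t / (β ^ dyadicLevel x * obar (varrho N x)) else 0

lemma dyadicWeight_nonneg (hβ : 0 ≤ β) (t : ℕ) (x : Fin N) : 0 ≤ dyadicWeight β t x := by
  unfold dyadicWeight
  split_ifs
  · exact div_nonneg (pow_nonneg hβ t)
      (mul_nonneg (pow_nonneg hβ _) (zero_le_one.trans (le_max_left _ _)))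
  · exact le_rfl

lemma inv_qsqFreq_le_sum_prod_dyadicWeight (hβ : 1 ≤ β) (hβd : β ^ d = 2)
    (i : Fin d → Fin N) :
    (qsqFreq i)⁻¹ ≤ 2 * ∑ t ∈ range (Nat.log 2 N + 1), ∏ k, dyadicWeight β t (i k) := by
  have : Nonempty (Fin d) := ⟨⟨0, Nat.pos_of_ne_zero fun hd => by simp [hd] at hβd⟩⟩
  obtain ⟨b, hb⟩ := Finite.exists_min fun k => dyadicLevel (i k)
  have hweight : ∀ k, β ^ dyadicLevel (i b) / (β ^ dyadicLevel (i k) * obar (varrho N (i k))) =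
      dyadicWeight β (dyadicLevel (i b)) (i k) := fun k => by rw [dyadicWeight, if_pos (hb k)]
  calc (qsqFreq i)⁻¹
      ≤ 2 * ∏ k, β ^ dyadicLevel (i b) / (β ^ dyadicLevel (i k) * obar (varrho N (i k))) :=
        inv_qsq_le_two_mul_prod hβ hβd (fun k => obar_varrho_le (i k))
          (fun k => two_pow_le_two_mul_obar_varrho (i k)) b
    _ ≤ 2 * ∑ t ∈ range (Nat.log 2 N + 1), ∏ k, dyadicWeight β t (i k) := by
        simp_rw [hweight]
        gcongr
        refine single_le_sum (f := fun t => ∏ k, dyadicWeight β t (i k))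
          (fun t _ => prod_nonneg fun k _ => dyadicWeight_nonneg (by linarith) t (i k)) ?_
        exact mem_range.2 (Nat.lt_succ_of_le (dyadicLevel_le_log (i b)))

lemma sum_dyadicWeight_le (hβ : 1 < β) (t : ℕ) :
    ∑ x : Fin N, dyadicWeight β t x ≤ 2 * β / (β - 1) := by
  have hβ0 : 0 < β := zero_lt_one.trans hβ
  set h : ℕ → ℝ := fun s => if t ≤ s then β ^ t * β⁻¹ ^ s else 0
  have hweight : ∀ x : Fin N, dyadicWeight β t x = h (dyadicLevel x) / obar (varrho N x) :=
    fun x => by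
      simp only [dyadicWeight, h, inv_pow]
      split_ifs
      · field_simp
      · rw [zero_div]
  have hgeom : ∑ s ∈ range (Nat.log 2 N + 1), h s ≤ β / (β - 1) := by
    have hIco : (range (Nat.log 2 N + 1)).filter (t ≤ ·) = Ico t (Nat.log 2 N + 1) := by
      ext s
      simp only [mem_filter, mem_range, mem_Ico]
      omega
    calc ∑ s ∈ range (Nat.log 2 N + 1), h s = β ^ t * ∑ s ∈ Ico t (Nat.log 2 N + 1), β⁻¹ ^ s := by
          rw [← sum_filter, hIco, mul_sum]
      _ ≤ β ^ t * (β⁻¹ ^ t / (1 - β⁻¹)) := by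
          gcongr
          exact geom_sum_Ico_le_of_lt_one (by positivity) (inv_lt_one_of_one_lt₀ hβ)
      _ = β / (β - 1) := by
          rw [inv_pow]
          field_simp
  calc ∑ x : Fin N, dyadicWeight β t x
      ≤ 2 * ∑ s ∈ range (Nat.log 2 N + 1), h s := by
        simp_rw [hweight]
        exact sum_div_obar_varrho_le h fun s => by positivity
    _ ≤ 2 * β / (β - 1) := by
        rw [mul_div_assoc]
        gcongr

lemma sum_inv_qsqFreq_le (hβ : 1 < β) (hβd : β ^ d = 2) :
    ∑ i : Fin d → Fin N, (qsqFreq i)⁻¹ ≤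
      2 * (Nat.log 2 N + 1) * (2 * β / (β - 1)) ^ d := by
  calc ∑ i : Fin d → Fin N, (qsqFreq i)⁻¹
      ≤ ∑ i : Fin d → Fin N, 2 * ∑ t ∈ range (Nat.log 2 N + 1), ∏ k, dyadicWeight β t (i k) :=
        sum_le_sum fun i _ => inv_qsqFreq_le_sum_prod_dyadicWeight hβ.le hβd i
    _ = 2 * ∑ t ∈ range (Nat.log 2 N + 1), (∑ x : Fin N, dyadicWeight β t x) ^ d := by
        rw [← mul_sum, sum_comm]
        simp_rw [← Fintype.prod_sum, prod_const, card_univ, Fintype.card_fin]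
    _ ≤ 2 * ∑ _t ∈ range (Nat.log 2 N + 1), (2 * β / (β - 1)) ^ d := by
        gcongr with t
        · exact sum_nonneg fun x _ => dyadicWeight_nonneg (by linarith) t x
        · exact sum_dyadicWeight_le hβ t
    _ = 2 * (Nat.log 2 N + 1) * (2 * β / (β - 1)) ^ d := by
        rw [sum_const, card_range, nsmul_eq_mul]
        push_cast
        ring

end UpperBound

def densityConst (d : ℕ) : ℝ :=
  4 * (2 * 2 ^ (d : ℝ)⁻¹ / (2 ^ (d : ℝ)⁻¹ - 1)) ^ d / Real.log 2

lemma densityConst_pos (d : ℕ) : 0 < densityConst d := by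
  have hlog : 0 < Real.log 2 := Real.log_pos one_lt_two
  rcases Nat.eq_zero_or_pos d with rfl | hd
  · simpa [densityConst] using hlog
  · have hβ : 1 < (2 : ℝ) ^ (d : ℝ)⁻¹ := Real.one_lt_rpow one_lt_two (by positivity)
    have : 0 < 2 * (2 : ℝ) ^ (d : ℝ)⁻¹ / (2 ^ (d : ℝ)⁻¹ - 1) :=
      div_pos (by positivity) (by linarith)
    unfold densityConst
    positivity

lemma sum_inv_qsqFreq_le_densityConst_mul_log {d r : ℕ} (hd : 0 < d) (hr : 1 ≤ r) :
    ∑ i : Fin d → Fin (2 ^ r), (qsqFreq i)⁻¹ ≤ densityConst d * Real.log (2 ^ r) := by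
  set β : ℝ := 2 ^ (d : ℝ)⁻¹
  have hβ : 1 < β := Real.one_lt_rpow one_lt_two (by positivity)
  have hβd : β ^ d = 2 := Real.rpow_inv_natCast_pow zero_le_two hd.ne'
  have hK : 0 ≤ (2 * β / (β - 1)) ^ d := pow_nonneg (div_nonneg (by positivity) (by linarith)) d
  have hr' : (1 : ℝ) ≤ r := by exact_mod_cast hr
  calc ∑ i : Fin d → Fin (2 ^ r), (qsqFreq i)⁻¹ ≤ 2 * (r + 1) * (2 * β / (β - 1)) ^ d := by
        simpa [Nat.log_pow one_lt_two] using sum_inv_qsqFreq_le (N := 2 ^ r) hβ hβd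
    _ ≤ 4 * r * (2 * β / (β - 1)) ^ d := by nlinarith
    _ = densityConst d * Real.log (2 ^ r) := by
        rw [show densityConst d = 4 * (2 * β / (β - 1)) ^ d / Real.log 2 from rfl, Real.log_pow]
        field_simp

/-- **Lemma (optimality of the `q`-density).**
(i) For every probability distribution `p` on `{-N/2+1,…,N/2}^d` (given as a density on
row indices), every admissible constant `Γ` (i.e. `(q_ω)⁻² ≤ Γ p_ω` for all `ω`) satisfies
`Γ ≥ c log N`; in particular `Γ(p) ≥ c log N`.
(ii) If `p_ω = C_{N,d} (q_ω)⁻²` with `C_{N,d}` the normalizing constant, then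
`C_d log N` is an admissible constant, i.e. `Γ(p) ≤ C_d log N`. -/
theorem optimal_fourier_density_gamma_bounds :
    (∃ c : ℝ, 0 < c ∧
      ∀ (d r : ℕ), 1 ≤ d → 1 ≤ r →
        ∀ p : (Fin d → Fin (2 ^ r)) → ℝ, (∀ i, 0 ≤ p i) → (∑ i, p i) = 1 →
          ∀ Γ : ℝ, 0 < Γ → (∀ i : Fin d → Fin (2 ^ r), (qsqFreq i)⁻¹ ≤ Γ * p i) →
            c * Real.log (2 ^ r) ≤ Γ) ∧
    (∃ C : ℕ → ℝ, (∀ d, 0 < C d) ∧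
      ∀ (d r : ℕ), 1 ≤ d → 1 ≤ r →
        ∀ cN : ℝ, (∑ i : Fin d → Fin (2 ^ r), cN * (qsqFreq i)⁻¹) = 1 →
          ∀ i : Fin d → Fin (2 ^ r),
            (qsqFreq i)⁻¹ ≤ (C d * Real.log (2 ^ r)) * (cN * (qsqFreq i)⁻¹)) := by
  refine ⟨⟨(Real.log 2)⁻¹, inv_pos.2 (Real.log_pos one_lt_two), ?_⟩,
    ⟨densityConst, densityConst_pos, ?_⟩⟩
  · intro d r hd _ p _ hp Γ _ hΓ
    calc (Real.log 2)⁻¹ * Real.log (2 ^ r) = (Nat.log 2 (2 ^ r) : ℝ) := by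
          rw [Real.log_pow, Nat.log_pow one_lt_two]
          field_simp
      _ ≤ ∑ i : Fin d → Fin (2 ^ r), (qsqFreq i)⁻¹ := log_le_sum_inv_qsqFreq hd
      _ ≤ ∑ i, Γ * p i := sum_le_sum fun i _ => hΓ i
      _ = Γ := by rw [← mul_sum, hp, mul_one]
  · intro d r hd hr cN hcN i
    rw [← mul_sum] at hcN
    have hS : (1 : ℝ) ≤ ∑ i : Fin d → Fin (2 ^ r), (qsqFreq i)⁻¹ := by
      have := log_le_sum_inv_qsqFreq (N := 2 ^ r) hd
      rw [Nat.log_pow one_lt_two] at this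
      exact le_trans (by exact_mod_cast hr) this
    have hcN0 : 0 ≤ cN := by nlinarith
    calc (qsqFreq i)⁻¹ = (cN * ∑ i : Fin d → Fin (2 ^ r), (qsqFreq i)⁻¹) * (qsqFreq i)⁻¹ := by
          rw [hcN, one_mul]
      _ ≤ (cN * (densityConst d * Real.log (2 ^ r))) * (qsqFreq i)⁻¹ := by
          gcongr
          · exact (inv_pos.2 (qsqFreq_pos i)).le
          · exact sum_inv_qsqFreq_le_densityConst_mul_log hd hr
      _ = densityConst d * Real.log (2 ^ r) * (cN * (qsqFreq i)⁻¹) := by ring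

end
end

section
/- Suppose A ∈ ℂ^{m×N} has the ℓ^{2,2}-robust null space property of order s with constants 0 < ρ < 1 and γ > 0. Then for all X, Z ∈ ℂ^{N×M}: ‖Z − X‖_{ℓ^{2,1}} ≤ ((1+ρ)/(1−ρ))·( 2σ_s(X)_{ℓ^{2,1}} + ‖Z‖_{ℓ^{2,1}} − ‖X‖_{ℓ^{2,1}} ) + (2γ/(1−ρ))·√s·‖A(Z−X)‖_{ℓ^{2,2}}, and ‖Z − X‖_{ℓ^{2,2}} ≤ ((3ρ+1)(ρ+1)/(2(1−ρ)))·( 2σ_s(X)_{ℓ^{2,1}} + ‖Z‖_{ℓ^{2,1}} − ‖X‖_{ℓ^{2,1}} )/√s + ((3ρ+5)γ/(2(1−ρ)))·‖A(Z−X)‖_{ℓ^{2,2}}. -/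
open MeasureTheory
open scoped BigOperators ENNReal

/-!
Everything reduces to the vector `a` of row norms `aᵢ = ‖(Z - X)ᵢ‖₂`, for which the null space
property reads `‖a_Δ‖₂ ≤ ρ/√s ‖a_{Δᶜ}‖₁ + K` with `K = γ ‖A(Z - X)‖`. By Cauchy–Schwarz this gives
`‖a_Δ‖₁ ≤ ρ ‖a_{Δᶜ}‖₁ + √s K`; combined with the triangle inequality row by row on the support `Δ`
of a best `s`-row approximation of `X`, it yields the `ℓ^{2,1}` bound. For the `ℓ^{2,2}` bound, split
`a` along the set `S` of its `s` largest entries: the head is controlled by the null space property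
and the tail by Stechkin's estimate `‖a_{Sᶜ}‖₂ ≤ ‖a‖₁ / (2√s)`, after which the `ℓ^{2,1}` bound is
substituted for `‖a‖₁`.
-/

open Finset

lemma Real.sqrt_add_le_sqrt_add_sqrt {x y : ℝ} (hx : 0 ≤ x) (hy : 0 ≤ y) : √(x + y) ≤ √x + √y :=
  Real.sqrt_le_iff.mpr ⟨by positivity, by
    nlinarith [Real.sq_sqrt hx, Real.sq_sqrt hy, Real.sqrt_nonneg x, Real.sqrt_nonneg y]⟩

lemma Finset.sum_le_sqrt_card_mul_sqrt_sum_sq {ι : Type*} (Δ : Finset ι) (a : ι → ℝ) :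
    ∑ i ∈ Δ, a i ≤ √(#Δ) * √(∑ i ∈ Δ, a i ^ 2) := by
  rw [← Real.sqrt_mul (by positivity)]
  exact (le_abs_self _).trans (Real.abs_le_sqrt sq_sum_le_card_mul_sum_sq)

section Vectors

variable {ι : Type*}

lemma exists_card_le_forall_sum_le [Fintype ι] (s : ℕ) (a : ι → ℝ) :
    ∃ S : Finset ι, #S ≤ s ∧ ∀ T : Finset ι, #T ≤ s → ∑ i ∈ T, a i ≤ ∑ i ∈ S, a i := by
  obtain ⟨S, hS, hmax⟩ := exists_max_image ((univ : Finset ι).powerset.filter (#· ≤ s))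
    (fun T => ∑ i ∈ T, a i) ⟨∅, by simp⟩
  exact ⟨S, (mem_filter.mp hS).2, fun T hT => hmax T (by simpa using hT)⟩

variable [DecidableEq ι]

lemma card_mul_le_sum_of_forall_sum_le {s : ℕ} {a : ι → ℝ} (ha : 0 ≤ a) {S : Finset ι}
    (hS : #S ≤ s) (hmax : ∀ T : Finset ι, #T ≤ s → ∑ i ∈ T, a i ≤ ∑ i ∈ S, a i)
    {j : ι} (hj : j ∉ S) : s * a j ≤ ∑ i ∈ S, a i := by
  rcases hS.lt_or_eq with hlt | rfl
  · have hinsert := hmax (insert j S) (by rw [card_insert_of_notMem hj]; omega)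
    rw [sum_insert hj] at hinsert
    have hsum : 0 ≤ ∑ i ∈ S, a i := sum_nonneg fun i _ => ha i
    nlinarith [(Nat.cast_nonneg s : (0 : ℝ) ≤ s)]
  · have hswap : ∀ i ∈ S, a j ≤ a i := by
      intro i hi
      have hji : j ∉ S.erase i := fun h => hj (mem_of_mem_erase h)
      have hcard : #(insert j (S.erase i)) ≤ #S := by
        rw [card_insert_of_notMem hji, card_erase_of_mem hi]
        have := card_pos.mpr ⟨i, hi⟩
        omega
      have hle := hmax _ hcard
      rw [sum_insert hji, ← add_sum_erase S a hi] at hle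
      linarith
    calc (#S : ℝ) * a j = ∑ _i ∈ S, a j := by rw [sum_const, nsmul_eq_mul]
      _ ≤ ∑ i ∈ S, a i := sum_le_sum hswap

variable [Fintype ι]

/-- Stechkin's estimate for the best `s`-term approximation in `ℓ²`. -/
lemma exists_card_le_sqrt_sum_sq_compl_le {s : ℕ} (hs : 0 < s) {a : ι → ℝ} (ha : 0 ≤ a) :
    ∃ S : Finset ι, #S ≤ s ∧ √(∑ i ∈ Sᶜ, a i ^ 2) ≤ (∑ i, a i) / (2 * √s) := by
  obtain ⟨S, hS, hmax⟩ := exists_card_le_forall_sum_le s a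
  refine ⟨S, hS, ?_⟩
  have htail : s * ∑ i ∈ Sᶜ, a i ^ 2 ≤ (∑ i ∈ S, a i) * ∑ i ∈ Sᶜ, a i := by
    rw [mul_sum, mul_sum]
    refine sum_le_sum fun j hj => ?_
    calc (s : ℝ) * a j ^ 2 = s * a j * a j := by ring
      _ ≤ (∑ i ∈ S, a i) * a j :=
        mul_le_mul_of_nonneg_right (card_mul_le_sum_of_forall_sum_le ha hS hmax
          (mem_compl.mp hj)) (ha j)
  have hs' : (0 : ℝ) < s := by exact_mod_cast hs
  have hsq : (2 * √(s : ℝ)) ^ 2 = 4 * s := by rw [mul_pow, Real.sq_sqrt hs'.le]; norm_num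
  rw [Real.sqrt_le_left (div_nonneg (sum_nonneg fun i _ => ha i) (by positivity)), div_pow, hsq,
    le_div_iff₀ (by positivity), ← sum_add_sum_compl S a]
  nlinarith [sq_nonneg (∑ i ∈ S, a i - ∑ i ∈ Sᶜ, a i)]

def RobustNullSpaceIneq (s : ℕ) (ρ K : ℝ) (a : ι → ℝ) : Prop :=
  ∀ Δ : Finset ι, #Δ ≤ s → √(∑ i ∈ Δ, a i ^ 2) ≤ ρ / √s * ∑ i ∈ Δᶜ, a i + K

lemma sum_compl_le_of_le_add {a b c : ι → ℝ} (hab : ∀ i, a i ≤ c i + b i)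
    (hba : ∀ i, b i ≤ c i + a i) (Δ : Finset ι) :
    ∑ i ∈ Δᶜ, a i ≤ ∑ i, c i - ∑ i, b i + ∑ i ∈ Δ, a i + 2 * ∑ i ∈ Δᶜ, b i := by
  have hcompl : ∑ i ∈ Δᶜ, a i ≤ ∑ i ∈ Δᶜ, c i + ∑ i ∈ Δᶜ, b i := by
    rw [← sum_add_distrib]; exact sum_le_sum fun i _ => hab i
  have hmem : ∑ i ∈ Δ, b i ≤ ∑ i ∈ Δ, c i + ∑ i ∈ Δ, a i := by
    rw [← sum_add_distrib]; exact sum_le_sum fun i _ => hba i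
  linarith [sum_add_sum_compl Δ c, sum_add_sum_compl Δ b]

namespace RobustNullSpaceIneq

variable {s : ℕ} {ρ K : ℝ} {a : ι → ℝ}

lemma sum_le (h : RobustNullSpaceIneq s ρ K a) (hs : 0 < s) {Δ : Finset ι} (hΔ : #Δ ≤ s) :
    ∑ i ∈ Δ, a i ≤ ρ * ∑ i ∈ Δᶜ, a i + √s * K := by
  have hsqrt : 0 < √(s : ℝ) := Real.sqrt_pos.mpr (by exact_mod_cast hs)
  calc ∑ i ∈ Δ, a i ≤ √(#Δ) * √(∑ i ∈ Δ, a i ^ 2) := sum_le_sqrt_card_mul_sqrt_sum_sq Δ a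
    _ ≤ √s * (ρ / √s * ∑ i ∈ Δᶜ, a i + K) :=
      mul_le_mul (Real.sqrt_le_sqrt (by exact_mod_cast hΔ)) (h Δ hΔ) (Real.sqrt_nonneg _)
        hsqrt.le
    _ = ρ * ∑ i ∈ Δᶜ, a i + √s * K := by field_simp

variable {b c : ι → ℝ} {t : ℝ}

lemma sub_mul_sum_compl_le (h : RobustNullSpaceIneq s ρ K a) (hs : 0 < s)
    (hab : ∀ i, a i ≤ c i + b i) (hba : ∀ i, b i ≤ c i + a i) {Δ : Finset ι} (hΔ : #Δ ≤ s)
    (ht : ∑ i ∈ Δᶜ, b i ≤ t) :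
    (1 - ρ) * ∑ i ∈ Δᶜ, a i ≤ 2 * t + ∑ i, c i - ∑ i, b i + √s * K := by
  linarith [h.sum_le hs hΔ, sum_compl_le_of_le_add hab hba Δ]

lemma sum_le_of_le_add (h : RobustNullSpaceIneq s ρ K a) (hs : 0 < s) (hρ0 : 0 ≤ ρ)
    (hρ1 : ρ < 1) (hab : ∀ i, a i ≤ c i + b i) (hba : ∀ i, b i ≤ c i + a i) {Δ : Finset ι}
    (hΔ : #Δ ≤ s) (ht : ∑ i ∈ Δᶜ, b i ≤ t) :
    ∑ i, a i ≤ (1 + ρ) / (1 - ρ) * (2 * t + ∑ i, c i - ∑ i, b i) + 2 / (1 - ρ) * √s * K := by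
  have hcompl := h.sub_mul_sum_compl_le hs hab hba hΔ ht
  have hsplit := sum_add_sum_compl Δ a
  have hΔsum := h.sum_le hs hΔ
  have hmul : (1 - ρ) * ∑ i, a i ≤ (1 + ρ) * (2 * t + ∑ i, c i - ∑ i, b i) + 2 * √s * K := by
    nlinarith
  have h1ρ : 0 < 1 - ρ := by linarith
  calc ∑ i, a i = (1 - ρ) * (∑ i, a i) / (1 - ρ) := (mul_div_cancel_left₀ _ h1ρ.ne').symm
    _ ≤ ((1 + ρ) * (2 * t + ∑ i, c i - ∑ i, b i) + 2 * √s * K) / (1 - ρ) := by gcongr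
    _ = _ := by ring

lemma sqrt_sum_sq_le (h : RobustNullSpaceIneq s ρ K a) (hs : 0 < s) (hρ : 0 ≤ ρ)
    (ha : 0 ≤ a) : √(∑ i, a i ^ 2) ≤ (2 * ρ + 1) / (2 * √s) * ∑ i, a i + K := by
  obtain ⟨S, hS, htail⟩ := exists_card_le_sqrt_sum_sq_compl_le hs ha
  have hsqrt : 0 < √(s : ℝ) := Real.sqrt_pos.mpr (by exact_mod_cast hs)
  have hhead : √(∑ i ∈ S, a i ^ 2) ≤ ρ / √s * ∑ i, a i + K := by
    have := mul_le_mul_of_nonneg_left (sum_le_univ_sum_of_nonneg ha (s := Sᶜ))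
      (div_nonneg hρ hsqrt.le)
    linarith [h S hS]
  have hsplit : √(∑ i, a i ^ 2) ≤ √(∑ i ∈ S, a i ^ 2) + √(∑ i ∈ Sᶜ, a i ^ 2) := by
    rw [← sum_add_sum_compl S]
    exact Real.sqrt_add_le_sqrt_add_sqrt (by positivity) (by positivity)
  have hcoeff : ρ / √s * ∑ i, a i + (∑ i, a i) / (2 * √s) =
      (2 * ρ + 1) / (2 * √s) * ∑ i, a i := by
    field_simp
  linarith

lemma sqrt_sum_sq_le_of_le_add (h : RobustNullSpaceIneq s ρ K a) (hs : 0 < s) (hρ0 : 0 ≤ ρ)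
    (hρ1 : ρ < 1) (hK : 0 ≤ K) (ha : 0 ≤ a) (hab : ∀ i, a i ≤ c i + b i)
    (hba : ∀ i, b i ≤ c i + a i) {Δ : Finset ι} (hΔ : #Δ ≤ s) (ht : ∑ i ∈ Δᶜ, b i ≤ t) :
    √(∑ i, a i ^ 2) ≤ (3 * ρ + 1) * (ρ + 1) / (2 * (1 - ρ)) *
        ((2 * t + ∑ i, c i - ∑ i, b i) / √s) + (3 * ρ + 5) / (2 * (1 - ρ)) * K := by
  set D := 2 * t + ∑ i, c i - ∑ i, b i
  have hsqrt : 0 < √(s : ℝ) := Real.sqrt_pos.mpr (by exact_mod_cast hs)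
  have h1ρ : 0 < 1 - ρ := by linarith
  have hl21 := h.sum_le_of_le_add hs hρ0 hρ1 hab hba hΔ ht
  have hstep := mul_le_mul_of_nonneg_left hl21
    (by positivity : 0 ≤ (2 * ρ + 1) / (2 * √(s : ℝ)))
  -- the stated constants exceed those obtained by substitution by a multiple of `ρ D / √s + K`
  have hslack : 0 ≤ ρ * (D / √s) + K := by
    have hDK : 0 ≤ D + √s * K := (mul_nonneg h1ρ.le (sum_nonneg fun i _ => ha i)).trans
      (h.sub_mul_sum_compl_le hs hab hba hΔ ht)
    have : ρ * (D / √s) + K = (ρ * D + √s * K) / √s := by field_simp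
    rw [this]
    exact div_nonneg (by nlinarith [mul_nonneg hsqrt.le hK]) hsqrt.le
  have hcoeff : (3 * ρ + 1) * (ρ + 1) / (2 * (1 - ρ)) * (D / √s) + (3 * ρ + 5) / (2 * (1 - ρ)) * K
      = (2 * ρ + 1) / (2 * √s) * ((1 + ρ) / (1 - ρ) * D + 2 / (1 - ρ) * √s * K) + K
        + (ρ + 1) / (2 * (1 - ρ)) * (ρ * (D / √s) + K) := by
    field_simp; ring
  linarith [h.sqrt_sum_sq_le hs hρ0 ha, mul_nonneg (by positivity :
    0 ≤ (ρ + 1) / (2 * (1 - ρ))) hslack]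

end RobustNullSpaceIneq

end Vectors

section RowNorms

variable {ι κ : Type*} [Fintype ι] [Fintype κ]

lemma l2norm_eq_norm_toLp (v : κ → ℂ) : l2norm v = ‖(WithLp.toLp 2 v : EuclideanSpace ℂ κ)‖ := by
  rw [EuclideanSpace.norm_eq]; rfl

lemma l2norm_nonneg (v : κ → ℂ) : 0 ≤ l2norm v := Real.sqrt_nonneg _

lemma l2norm_sub_le (u v : κ → ℂ) : l2norm (u - v) ≤ l2norm u + l2norm v := by
  simpa only [l2norm_eq_norm_toLp, WithLp.toLp_sub] using norm_sub_le _ _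

lemma l2norm_le_add_l2norm_sub (u v : κ → ℂ) : l2norm v ≤ l2norm u + l2norm (u - v) := by
  simpa only [l2norm_eq_norm_toLp, WithLp.toLp_sub] using norm_le_norm_add_norm_sub _ _

lemma l22norm_eq_sqrt_sum_sq_l2norm (V : ι → κ → ℂ) : l22norm V = √(∑ i, l2norm (V i) ^ 2) := by
  simp only [l22norm, l2norm, Real.sq_sqrt (sum_nonneg fun _ _ => sq_nonneg _)]

variable [DecidableEq ι]

lemma l22norm_ite_mem (Δ : Finset ι) (V : ι → κ → ℂ) :
    l22norm (fun i j => if i ∈ Δ then V i j else 0) = √(∑ i ∈ Δ, l2norm (V i) ^ 2) := by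
  have hrow : ∀ i, l2norm (fun j => if i ∈ Δ then V i j else 0) ^ 2 =
      if i ∈ Δ then l2norm (V i) ^ 2 else 0 := by
    intro i; split_ifs <;> simp [l2norm]
  rw [l22norm_eq_sqrt_sum_sq_l2norm]
  simp only [hrow, sum_ite_mem, univ_inter]

lemma l21norm_ite_mem (Δ : Finset ι) (V : ι → κ → ℂ) :
    l21norm (fun i j => if i ∈ Δ then (0 : ℂ) else V i j) = ∑ i ∈ Δᶜ, l2norm (V i) := by
  have hrow : ∀ i, l2norm (fun j => if i ∈ Δ then (0 : ℂ) else V i j) =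
      if i ∈ Δᶜ then l2norm (V i) else 0 := by
    intro i; by_cases hi : i ∈ Δ <;> simp [hi, l2norm]
  simp only [l21norm, hrow, sum_ite_mem, univ_inter]

lemma exists_sum_compl_le_sigma21 (s : ℕ) (X : ι → κ → ℂ) :
    ∃ Δ : Finset ι, #Δ ≤ s ∧ ∑ i ∈ Δᶜ, l2norm (X i) ≤ sigma21 s X := by
  classical
  obtain ⟨S, hS, hmax⟩ := exists_card_le_forall_sum_le s fun i => l2norm (X i)
  refine ⟨S, hS, le_csInf ⟨_, 0, by simp, rfl⟩ ?_⟩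
  rintro _ ⟨Z, hZ, rfl⟩
  set T := univ.filter fun i => Z i ≠ 0
  have hT : #T ≤ s := by rwa [← Set.ncard_coe_finset, coe_filter_univ]
  calc ∑ i ∈ Sᶜ, l2norm (X i) ≤ ∑ i ∈ Tᶜ, l2norm (X i) := by
        linarith [hmax T hT, sum_add_sum_compl S fun i => l2norm (X i),
          sum_add_sum_compl T fun i => l2norm (X i)]
    _ = ∑ i ∈ Tᶜ, l2norm (fun j => X i j - Z i j) := by
        refine sum_congr rfl fun i hi => ?_
        have hZi : Z i = 0 := by simpa [T] using hi
        simp [hZi]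
    _ ≤ l21norm (fun i j => X i j - Z i j) := sum_le_univ_sum_of_nonneg fun i => l2norm_nonneg _

end RowNorms

lemma RNSP22.robustNullSpaceIneq {M m N s : ℕ} {A : Matrix (Fin m) (Fin N) ℂ} {ρ γ : ℝ}
    (hA : RNSP22 M A s ρ γ) (V : Fin N → Fin M → ℂ) :
    RobustNullSpaceIneq s ρ (γ * l22norm (fun k j => ∑ i, A k i * V i j))
      (fun i => l2norm (V i)) := by
  intro Δ hΔ
  simpa only [l22norm_ite_mem, l21norm_ite_mem] using hA V Δ hΔ

/-- **Lemma (`ℓ^{2,2}`-rNSP implies `ℓ^{2,1}` and `ℓ^{2,2}` distance bounds).** -/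
theorem rnsp22_distance_bounds :
    ∀ (m N M s : ℕ) (ρ γ : ℝ), 1 ≤ s → 0 < ρ → ρ < 1 → 0 < γ →
      ∀ A : Matrix (Fin m) (Fin N) ℂ, RNSP22 M A s ρ γ →
        ∀ X Z : Fin N → Fin M → ℂ,
          l21norm (fun i j => Z i j - X i j) ≤
            (1 + ρ) / (1 - ρ) * (2 * sigma21 s X + l21norm Z - l21norm X) +
              2 * γ / (1 - ρ) * Real.sqrt s *
                l22norm (fun k j => ∑ i, A k i * (Z i j - X i j)) ∧
          l22norm (fun i j => Z i j - X i j) ≤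
            (3 * ρ + 1) * (ρ + 1) / (2 * (1 - ρ)) *
                ((2 * sigma21 s X + l21norm Z - l21norm X) / Real.sqrt s) +
              (3 * ρ + 5) * γ / (2 * (1 - ρ)) *
                l22norm (fun k j => ∑ i, A k i * (Z i j - X i j)) := by
  intro m N M s ρ γ hs hρ0 hρ1 hγ A hA X Z
  obtain ⟨Δ, hΔ, hσ⟩ := exists_sum_compl_le_sigma21 s X
  have hnsp := hA.robustNullSpaceIneq (fun i j => Z i j - X i j)
  have hab : ∀ i, l2norm (fun j => Z i j - X i j) ≤ l2norm (Z i) + l2norm (X i) :=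
    fun i => l2norm_sub_le (Z i) (X i)
  have hba : ∀ i, l2norm (X i) ≤ l2norm (Z i) + l2norm (fun j => Z i j - X i j) :=
    fun i => l2norm_le_add_l2norm_sub (Z i) (X i)
  have hK : 0 ≤ γ * l22norm (fun k j => ∑ i, A k i * (Z i j - X i j)) :=
    mul_nonneg hγ.le (Real.sqrt_nonneg _)
  rw [l22norm_eq_sqrt_sum_sq_l2norm (fun i j => Z i j - X i j)]
  constructor
  · refine (hnsp.sum_le_of_le_add hs hρ0.le hρ1 hab hba hΔ hσ).trans_eq ?_
    simp only [l21norm]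
    ring
  · refine (hnsp.sqrt_sum_sq_le_of_le_add hs hρ0.le hρ1 hK (fun i => l2norm_nonneg _) hab hba hΔ
      hσ).trans_eq ?_
    simp only [l21norm]
    ring
end

section
/- Let N = 2^r, let F be the one-dimensional DFT matrix and {ψ^{(e)}_{j,n}} the one-dimensional discrete Haar wavelet basis of ℂ^N. There exists a universal constant C > 0 such that for all j = 0,…,r−1, n = 0,…,2^j−1, e ∈ {0,1} and all ω ∈ {−N/2+1,…,N/2}: (1/√N)·|(F ψ^{(e)}_{j,n})_{ϱ^{-1}(ω)}| ≤ C·(1/√(ω̄))·min{ (2^j/ω̄)^{1/2}, (ω̄/2^j)^{1/2+e} }, where ω̄ = max{1,|ω|}. In particular, (1/√N)·|(F ψ^{(e)}_{j,n})_{ϱ^{-1}(ω)}| ≤ C·2^{j/2}/max{ω̄, 2^j}. -/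
open MeasureTheory
open scoped BigOperators ENNReal

noncomputable section

/-! Row `ϱ⁻¹(ω)` of `F` is `t ↦ q ^ t` with `q = exp (iθ)`, `θ = -2πω/N`, and `ψ^{(e)}_{j,n}` is
`±2^{(j-r)/2}` on two adjacent blocks of length `h = N / 2^{j+1}`, so its Fourier coefficient
factors as `2^{(j-r)/2} q^{2nh} (∑_{s<h} q^s) (1 ± q^h)`. The geometric sum is at most `h`, and
also at most `2/|1 - q| ≤ N/(2|ω|)` by Jordan's inequality; the last factor is at most `2`, and
at most `h|θ|` when `e = 1`. This yields the three bounds `2^{-j/2}`, `2^{j/2}/ω̄` and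
`(π/2) ω̄ 2^{-3j/2}`, which combine to the claim with `C = 4`. -/

open Finset

lemma norm_geom_sum_le_of_norm_le_one {R : Type*} [SeminormedRing R] [NormOneClass R] {q : R}
    (hq : ‖q‖ ≤ 1) (m : ℕ) : ‖∑ s ∈ range m, q ^ s‖ ≤ m := by
  calc ‖∑ s ∈ range m, q ^ s‖ ≤ ∑ s ∈ range m, ‖q ^ s‖ := norm_sum_le _ _
    _ ≤ ∑ _s ∈ range m, (1 : ℝ) :=
        sum_le_sum fun s _ => (norm_pow_le q s).trans (pow_le_one₀ (norm_nonneg q) hq)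
    _ = m := by simp

lemma norm_geom_sum_mul_norm_one_sub_le {K : Type*} [NormedDivisionRing K] {q : K}
    (hq : ‖q‖ ≤ 1) (m : ℕ) : ‖∑ s ∈ range m, q ^ s‖ * ‖1 - q‖ ≤ 2 := by
  rw [← norm_mul, geom_sum_mul_neg]
  calc ‖1 - q ^ m‖ ≤ ‖(1 : K)‖ + ‖q ^ m‖ := norm_sub_le _ _
    _ ≤ 1 + 1 := by
        rw [norm_one, norm_pow]
        gcongr
        exact pow_le_one₀ (norm_nonneg q) hq
    _ = 2 := by norm_num

lemma norm_one_add_sign_mul_pow_le {q : ℂ} (hq : ‖q‖ = 1) (e : Bool) (m : ℕ) :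
    ‖1 + (if e then -1 else 1) * q ^ m‖ ≤ 2 := by
  calc ‖1 + (if e then -1 else 1) * q ^ m‖ ≤ ‖(1 : ℂ)‖ + ‖(if e then -1 else 1) * q ^ m‖ :=
        norm_add_le _ _
    _ = 2 := by cases e <;> norm_num [hq]

lemma norm_one_sub_exp_mul_I_le (x : ℝ) : ‖1 - Complex.exp (x * Complex.I)‖ ≤ |x| := by
  rw [norm_sub_rev, mul_comm]
  exact Real.norm_exp_I_mul_ofReal_sub_one_le

lemma two_div_pi_mul_abs_le_norm_one_sub_exp_mul_I {x : ℝ} (hx : |x| ≤ Real.pi) :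
    2 / Real.pi * |x| ≤ ‖1 - Complex.exp (x * Complex.I)‖ := by
  rw [norm_sub_rev, mul_comm (x : ℂ), Complex.norm_exp_I_mul_ofReal_sub_one, norm_mul,
    Real.norm_eq_abs, Real.norm_eq_abs, abs_two]
  have hx2 : |x / 2| ≤ Real.pi / 2 := by rw [abs_div, abs_two]; linarith
  have := Real.mul_abs_le_abs_sin hx2
  rw [abs_div, abs_two] at this
  linarith

lemma two_rpow_half (m : ℕ) : (2 : ℝ) ^ ((m : ℝ) / 2) = √(2 ^ m) := by
  rw [Real.sqrt_eq_rpow, ← Real.rpow_natCast, ← Real.rpow_mul zero_le_two]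
  ring_nf

lemma two_pow_eq_two_mul_two_pow_mul_two_pow {r j : ℕ} (hj : j < r) :
    (2 : ℝ) ^ r = 2 * 2 ^ j * 2 ^ (r - j - 1) := by
  rw [← pow_succ', ← pow_add]
  congr 1
  omega

def dftAngle (N : ℕ) (i : Fin N) : ℝ := -(2 * Real.pi * varrho N i) / N

lemma dft_apply (N : ℕ) (i t : Fin N) :
    dft N i t = Complex.exp (dftAngle N i * Complex.I) ^ (t : ℕ) := by
  rw [← Complex.exp_nat_mul, dft, Matrix.of_apply, dftAngle]
  congr 1
  push_cast
  ring

lemma two_mul_abs_varrho_le {N : ℕ} (i : Fin N) : 2 * |(varrho N i : ℝ)| ≤ N := by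
  have hi := i.isLt
  have h : 2 * ((i.val + 1) / 2) ≤ N := by omega
  rw [← Int.cast_abs, varrho, abs_mul, abs_pow, abs_neg, abs_one, one_pow, one_mul,
    Int.abs_natCast, Int.cast_natCast]
  exact_mod_cast h

lemma abs_dftAngle {N : ℕ} (i : Fin N) :
    |dftAngle N i| = 2 * Real.pi * |(varrho N i : ℝ)| / N := by
  rw [dftAngle, abs_div, abs_neg, abs_mul, abs_of_pos Real.two_pi_pos, Nat.abs_cast]

lemma abs_dftAngle_le_pi {N : ℕ} (i : Fin N) : |dftAngle N i| ≤ Real.pi := by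
  have hN : (0 : ℝ) < N := by exact_mod_cast i.pos
  rw [abs_dftAngle, div_le_iff₀ hN]
  nlinarith [two_mul_abs_varrho_le i, Real.pi_pos]

lemma sum_pow_mul_haar1 {r j n : ℕ} (hj : j < r) (hn : n < 2 ^ j) (e : Bool) (q : ℂ) :
    ∑ t : Fin (2 ^ r), q ^ (t : ℕ) * haar1 r j n e t =
      (((2 : ℝ) ^ (((j : ℝ) - r) / 2) : ℝ) : ℂ) * q ^ (n * 2 ^ (r - j)) *
        (∑ s ∈ range (2 ^ (r - j - 1)), q ^ s) *
        (1 + (if e then -1 else 1) * q ^ (2 ^ (r - j - 1))) := by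
  set A : ℂ := (((2 : ℝ) ^ (((j : ℝ) - r) / 2) : ℝ) : ℂ)
  set ε : ℂ := if e then -1 else 1
  set h := 2 ^ (r - j - 1)
  set t₀ := n * 2 ^ (r - j)
  have hh : 2 ^ (r - j) = h + h := by
    rw [← two_mul, ← pow_succ']
    congr 1
    omega
  have hfit : t₀ + (h + h) ≤ 2 ^ r :=
    calc t₀ + (h + h) = (n + 1) * 2 ^ (r - j) := by rw [← hh]; ring
      _ ≤ 2 ^ j * 2 ^ (r - j) := Nat.mul_le_mul_right _ hn
      _ = 2 ^ r := by rw [← pow_add, Nat.add_sub_cancel' hj.le]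
  set ψ : ℕ → ℂ := fun t =>
    if t₀ ≤ t ∧ t < t₀ + h then A else if t₀ + h ≤ t ∧ t < t₀ + (h + h) then ε * A else 0
  have hψ (t : Fin (2 ^ r)) : haar1 r j n e t = ψ t := by
    have : (n + 1) * 2 ^ (r - j) = t₀ + (h + h) := by rw [← hh]; ring
    simp only [haar1, this]
    rfl
  set f : ℕ → ℂ := fun t => q ^ t * ψ t
  calc ∑ t : Fin (2 ^ r), q ^ (t : ℕ) * haar1 r j n e t
      = ∑ t ∈ range (2 ^ r), f t := by
        simp only [hψ]
        exact Fin.sum_univ_eq_sum_range f _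
    _ = ∑ t ∈ Ico t₀ (t₀ + (h + h)), f t := by
        refine (sum_subset (fun t ht => ?_) fun t ht ht' => ?_).symm
        · simp only [mem_Ico, mem_range] at ht ⊢
          omega
        · simp only [mem_Ico, mem_range] at ht ht'
          have : ψ t = 0 := by simp only [ψ]; split_ifs <;> first | rfl | omega
          simp only [f, this, mul_zero]
    _ = ∑ s ∈ range h, f (t₀ + s) + ∑ s ∈ range h, f (t₀ + (h + s)) := by
        rw [sum_Ico_eq_sum_range, Nat.add_sub_cancel_left, sum_range_add]
    _ = A * q ^ t₀ * ∑ s ∈ range h, q ^ s +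
          A * q ^ t₀ * (ε * q ^ h) * ∑ s ∈ range h, q ^ s := by
        simp only [mul_sum]
        congr 1 <;> refine sum_congr rfl fun s hs => ?_ <;> rw [mem_range] at hs
        · simp only [f, ψ, if_pos (⟨by omega, by omega⟩ : t₀ ≤ t₀ + s ∧ t₀ + s < t₀ + h)]
          ring
        · simp only [f, ψ, if_neg (by omega : ¬(t₀ ≤ t₀ + (h + s) ∧ t₀ + (h + s) < t₀ + h)),
            if_pos (⟨by omega, by omega⟩ : t₀ + h ≤ t₀ + (h + s) ∧ t₀ + (h + s) < t₀ + (h + h))]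
          ring
    _ = _ := by ring

def haarFourierCoeff (r j n : ℕ) (e : Bool) (i : Fin (2 ^ r)) : ℝ :=
  (√(2 ^ r))⁻¹ * ‖(dft (2 ^ r)).mulVec (haar1 r j n e) i‖

lemma haarFourierCoeff_eq {r j n : ℕ} (hj : j < r) (hn : n < 2 ^ j) (e : Bool)
    (i : Fin (2 ^ r)) :
    haarFourierCoeff r j n e i = √(2 ^ j) / 2 ^ r *
      (‖∑ s ∈ range (2 ^ (r - j - 1)), Complex.exp (dftAngle _ i * Complex.I) ^ s‖ *
        ‖1 + (if e then -1 else 1) *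
          Complex.exp (dftAngle _ i * Complex.I) ^ (2 ^ (r - j - 1))‖) := by
  have hscale : (2 : ℝ) ^ (((j : ℝ) - r) / 2) = √(2 ^ j) / √(2 ^ r) := by
    rw [sub_div, Real.rpow_sub two_pos, two_rpow_half, two_rpow_half]
  rw [haarFourierCoeff, Matrix.mulVec, dotProduct]
  simp only [dft_apply]
  rw [sum_pow_mul_haar1 hj hn, norm_mul, norm_mul, norm_mul, Complex.norm_real, norm_pow,
    Complex.norm_exp_ofReal_mul_I, one_pow, mul_one, Real.norm_of_nonneg (by positivity), hscale]
  field_simp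
  rw [Real.sq_sqrt (by positivity)]

lemma haarFourierCoeff_le_inv_sqrt {r j n : ℕ} (hj : j < r) (hn : n < 2 ^ j) (e : Bool)
    (i : Fin (2 ^ r)) : haarFourierCoeff r j n e i ≤ (√(2 ^ j))⁻¹ := by
  have hq : ‖Complex.exp (dftAngle _ i * Complex.I)‖ = 1 := Complex.norm_exp_ofReal_mul_I _
  have hG := norm_geom_sum_le_of_norm_le_one hq.le (2 ^ (r - j - 1))
  have hB := norm_one_add_sign_mul_pow_le hq e (2 ^ (r - j - 1))
  rw [haarFourierCoeff_eq hj hn, two_pow_eq_two_mul_two_pow_mul_two_pow hj, ← Real.sqrt_div_self]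
  push_cast at hG
  calc _ ≤ √(2 ^ j) / (2 * 2 ^ j * 2 ^ (r - j - 1)) * (2 ^ (r - j - 1) * 2) := by gcongr
    _ = √(2 ^ j) / 2 ^ j := by field_simp

lemma haarFourierCoeff_le_sqrt_div_obar {r j n : ℕ} (hj : j < r) (hn : n < 2 ^ j) (e : Bool)
    (i : Fin (2 ^ r)) :
    haarFourierCoeff r j n e i ≤ √(2 ^ j) / obar (varrho (2 ^ r) i) := by
  have hT : (1 : ℝ) ≤ 2 ^ j := one_le_pow₀ one_le_two
  by_cases hω : varrho (2 ^ r) i = 0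
  · rw [hω, obar, Int.cast_zero, abs_zero, max_eq_left zero_le_one, div_one]
    refine (haarFourierCoeff_le_inv_sqrt hj hn e i).trans ?_
    rw [← Real.sqrt_inv]
    exact Real.sqrt_le_sqrt (inv_le_one_of_one_le₀ hT |>.trans hT)
  have hω1 : (1 : ℝ) ≤ |(varrho (2 ^ r) i : ℝ)| := by
    rw [← Int.cast_abs]; exact_mod_cast Int.one_le_abs hω
  rw [obar, max_eq_right hω1, le_div_iff₀ (by linarith)]
  set q := Complex.exp (dftAngle _ i * Complex.I)
  have hq : ‖q‖ = 1 := Complex.norm_exp_ofReal_mul_I _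
  have hGq := norm_geom_sum_mul_norm_one_sub_le hq.le (2 ^ (r - j - 1))
  have hB := norm_one_add_sign_mul_pow_le hq e (2 ^ (r - j - 1))
  -- Jordan's inequality: `‖1 - q‖ ≥ (2/π)|θ| = 4|ω|/N`
  have hq1 : 4 * |(varrho (2 ^ r) i : ℝ)| / 2 ^ r ≤ ‖1 - q‖ := by
    have := two_div_pi_mul_abs_le_norm_one_sub_exp_mul_I (abs_dftAngle_le_pi i)
    rw [abs_dftAngle] at this
    convert this using 1
    push_cast
    field_simp
    ring
  set G := ‖∑ s ∈ range (2 ^ (r - j - 1)), q ^ s‖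
  have hGω : G * |(varrho (2 ^ r) i : ℝ)| ≤ 2 ^ r / 2 :=
    calc G * |(varrho (2 ^ r) i : ℝ)|
        = G * (4 * |(varrho (2 ^ r) i : ℝ)| / 2 ^ r) * (2 ^ r / 4) := by field_simp
      _ ≤ 2 * (2 ^ r / 4) := by gcongr; exact (by gcongr : _ ≤ G * ‖1 - q‖).trans hGq
      _ = 2 ^ r / 2 := by ring
  rw [haarFourierCoeff_eq hj hn]
  calc √(2 ^ j) / 2 ^ r * (G * _) * |(varrho (2 ^ r) i : ℝ)|
      = √(2 ^ j) / 2 ^ r * ‖1 + (if e then -1 else 1) * q ^ (2 ^ (r - j - 1))‖ *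
          (G * |(varrho (2 ^ r) i : ℝ)|) := by ring
    _ ≤ √(2 ^ j) / 2 ^ r * 2 * (2 ^ r / 2) := by gcongr
    _ = √(2 ^ j) := by field_simp

lemma haarFourierCoeff_true_le {r j n : ℕ} (hj : j < r) (hn : n < 2 ^ j) (i : Fin (2 ^ r)) :
    haarFourierCoeff r j n true i ≤
      Real.pi / 2 * (obar (varrho (2 ^ r) i) / (2 ^ j * √(2 ^ j))) := by
  set h := 2 ^ (r - j - 1)
  set θ := dftAngle _ i
  set W := obar (varrho (2 ^ r) i)
  have hq : ‖Complex.exp (θ * Complex.I)‖ = 1 := Complex.norm_exp_ofReal_mul_I _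
  have hG := norm_geom_sum_le_of_norm_le_one hq.le h
  -- the mean-zero factor `1 - q^h` vanishes to first order at `θ = 0`
  have hB : ‖1 + (if true then -1 else 1) * Complex.exp (θ * Complex.I) ^ h‖ ≤
      h * (2 * Real.pi * W / 2 ^ r) := by
    have hpow : Complex.exp (θ * Complex.I) ^ h = Complex.exp (((h * θ : ℝ) : ℂ) * Complex.I) := by
      rw [← Complex.exp_nat_mul]; push_cast; ring_nf
    rw [if_pos rfl, neg_one_mul, ← sub_eq_add_neg, hpow]
    refine (norm_one_sub_exp_mul_I_le _).trans ?_
    have hW : |(varrho (2 ^ r) i : ℝ)| ≤ W := le_max_right _ _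
    rw [abs_mul, Nat.abs_cast, abs_dftAngle]
    push_cast
    gcongr
  rw [haarFourierCoeff_eq hj hn]
  calc _ ≤ √(2 ^ j) / 2 ^ r * (h * (h * (2 * Real.pi * W / 2 ^ r))) := by gcongr
    _ = Real.pi / 2 * (W / (2 ^ j * √(2 ^ j))) := by
      rw [two_pow_eq_two_mul_two_pow_mul_two_pow hj]
      field_simp
      rw [Real.sq_sqrt (by positivity)]
      push_cast [h]
      ring

lemma inv_sqrt_mul_min_rpow {T W : ℝ} (hT : 0 < T) (hW : 0 < W) (e : Bool) :
    (√W)⁻¹ * min ((T / W) ^ ((1 : ℝ) / 2)) ((W / T) ^ ((1 : ℝ) / 2 + if e then 1 else 0)) =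
      min (√T / W) (if e then W / (T * √T) else (√T)⁻¹) := by
  have hWW : √W ^ 2 = W := Real.sq_sqrt hW.le
  rw [mul_min_of_nonneg _ _ (by positivity), ← Real.sqrt_eq_rpow, Real.sqrt_div hT.le]
  cases e
  · rw [if_neg Bool.false_ne_true, if_neg Bool.false_ne_true, add_zero, ← Real.sqrt_eq_rpow,
      Real.sqrt_div hW.le]
    congr 1
    · field_simp
      exact hWW.symm
    · field_simp
  · rw [if_pos rfl, if_pos rfl, Real.rpow_add (by positivity), Real.rpow_one,
      ← Real.sqrt_eq_rpow, Real.sqrt_div hW.le]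
    congr 1
    · field_simp
      exact hWW.symm
    · field_simp

lemma haarFourierCoeff_le_sqrt_div_max {r j n : ℕ} (hj : j < r) (hn : n < 2 ^ j) (e : Bool)
    (i : Fin (2 ^ r)) :
    haarFourierCoeff r j n e i ≤ √(2 ^ j) / max (obar (varrho (2 ^ r) i)) (2 ^ j) := by
  rcases le_total (obar (varrho (2 ^ r) i)) (2 ^ j) with h | h
  · rw [max_eq_right h, Real.sqrt_div_self]
    exact haarFourierCoeff_le_inv_sqrt hj hn e i
  · rw [max_eq_left h]
    exact haarFourierCoeff_le_sqrt_div_obar hj hn e i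

/-- **Lemma (Fourier transform of a discrete Haar wavelet).**
For all `j < r`, `n < 2^j`, `e ∈ {0,1}` and every frequency `ω = ϱ(i)`,
`(1/√N)|(F ψ^{(e)}_{j,n})_{ϱ⁻¹(ω)}| ≤ C ω̄^{-1/2} min((2^j/ω̄)^{1/2}, (ω̄/2^j)^{1/2+e})`,
and in particular it is `≤ C·2^{j/2}/max(ω̄, 2^j)`. -/
theorem fourier_haar_entry_bound :
    ∃ C : ℝ, 0 < C ∧
      ∀ (r j n : ℕ) (e : Bool), 1 ≤ r → j < r → n < 2 ^ j →
        ∀ i : Fin (2 ^ r),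
          (Real.sqrt (2 ^ r))⁻¹ * ‖(dft (2 ^ r)).mulVec (haar1 r j n e) i‖ ≤
              C * (Real.sqrt (obar (varrho (2 ^ r) i)))⁻¹ *
                min (((2 ^ j : ℝ) / obar (varrho (2 ^ r) i)) ^ ((1 : ℝ) / 2))
                  ((obar (varrho (2 ^ r) i) / (2 ^ j : ℝ)) ^
                    ((1 : ℝ) / 2 + (if e then 1 else 0))) ∧
            (Real.sqrt (2 ^ r))⁻¹ * ‖(dft (2 ^ r)).mulVec (haar1 r j n e) i‖ ≤
              C * (2 : ℝ) ^ ((j : ℝ) / 2) / max (obar (varrho (2 ^ r) i)) ((2 : ℝ) ^ j) := by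
  refine ⟨4, by norm_num, fun r j n e _ hj hn i => ?_⟩
  have hW : (0 : ℝ) < obar (varrho (2 ^ r) i) := zero_lt_one.trans_le (le_max_left _ _)
  have le_four_mul {x : ℝ} (hx : 0 ≤ x) : x ≤ 4 * x := by linarith
  change haarFourierCoeff r j n e i ≤ _ ∧ haarFourierCoeff r j n e i ≤ _
  rw [mul_assoc, inv_sqrt_mul_min_rpow (by positivity) hW, mul_min_of_nonneg _ _ (by norm_num),
    two_rpow_half, mul_div_assoc]
  refine ⟨le_min ?_ ?_, ?_⟩
  · exact (haarFourierCoeff_le_sqrt_div_obar hj hn e i).trans (le_four_mul (by positivity))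
  · cases e
    · exact (haarFourierCoeff_le_inv_sqrt hj hn false i).trans (le_four_mul (by positivity))
    · rw [if_pos rfl]
      refine (haarFourierCoeff_true_le hj hn i).trans ?_
      gcongr
      linarith [Real.pi_lt_four]
  · exact (haarFourierCoeff_le_sqrt_div_max hj hn e i).trans (le_four_mul (by positivity))

end
end
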